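/- For every t > 0 and k ∈ ℕ, the Laguerre-type integral identity holds: (k!(n-1)!/(k+n-1)!) ∫_{ℝ^{2n}} p^λ_{2t}(2y,2v) φ^{n-1}_{k,λ}(2iy,2iv) dy dv = c_λ e^{2t(2k+n)|λ|}, where φ^{n-1}_{k,λ}(2iy,2iv) denotes the holomorphic extension of the Laguerre function evaluated at purely imaginary arguments and c_λ is a constant depending only on λ and n. -/

import Mathlib

open MeasureTheory Complex

noncomputable section

/-- The special Hermite heat kernel
`p^λ_t(x,u) = (4π)^{-n} λ^n (sinh tλ)^{-n} e^{-(λ/4)(coth tλ)(|x|²+|u|²)}`. -/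
def twistedHeatKernelR {n : ℕ} (lam t : ℝ)
    (p : (Fin n → ℝ) × (Fin n → ℝ)) : ℝ :=
  (4 * Real.pi) ^ (-(n : ℤ)) * lam ^ n * (Real.sinh (t * lam)) ^ (-(n : ℤ)) *
    Real.exp (-(lam / 4) * (Real.cosh (t * lam) / Real.sinh (t * lam)) *
      ((∑ j, (p.1 j) ^ 2) + ∑ j, (p.2 j) ^ 2))

/-- The generalized Laguerre polynomial `L_k^a(x)`. -/
def laguerre (a k : ℕ) (x : ℝ) : ℝ :=
  ∑ i ∈ Finset.range (k + 1),
    (-1 : ℝ) ^ i * ((k + a).choose (k - i)) * x ^ i / (i.factorial)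

/-! The heat kernel at `(2y, 2v)` is a Gaussian in `s = |y|² + |v|²`, and multiplying by
`e^{|λ| s}` leaves a Gaussian of width `c = |λ| e^{-X} / sinh X`, `X = 2t|λ|`. Expanding the
Laguerre polynomial and integrating the Gaussian moments in `ℝ^{2n}` term by term, the binomial
theorem sums the result to `π^n (c + 2|λ|)^k / c^{n+k}`. Since `c + 2|λ| = |λ| e^X / sinh X`,
all hyperbolic factors cancel against the normalisation of the kernel except `e^{(2k+n)X}`. -/

open Real Set Finset Module
open scoped Nat

theorem integral_Ioi_pow_mul_exp_neg_mul_sq {c : ℝ} (hc : 0 < c) (j : ℕ) :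
    ∫ y in Ioi (0 : ℝ), y ^ (2 * j + 1) * Real.exp (-(c * y ^ 2)) =
      j ! / (2 * c ^ (j + 1)) := by
  have h := integral_rpow_mul_exp_neg_mul_rpow two_pos (q := (2 * j + 1 : ℕ))
    (neg_one_lt_zero.trans_le (Nat.cast_nonneg _)) hc
  have hexp : -((2 * j + 1 : ℕ) + 1 : ℝ) / 2 = -(j + 1 : ℕ) := by push_cast; ring
  have hGamma : ((2 * j + 1 : ℕ) + 1 : ℝ) / 2 = j + 1 := by push_cast; ring
  rw [hexp, hGamma, Real.Gamma_nat_eq_factorial, rpow_neg hc.le, rpow_natCast] at h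
  convert h using 1
  · refine setIntegral_congr_fun measurableSet_Ioi fun y _ => ?_
    simp only [rpow_natCast, rpow_two, neg_mul]
  · field_simp

theorem laguerre_neg_mul (a k : ℕ) (b s : ℝ) :
    laguerre a k (-b * s) =
      ∑ i ∈ range (k + 1), ((k + a).choose (k - i) * b ^ i / i !) * s ^ i := by
  refine sum_congr rfl fun i _ => ?_
  have hsign : (-1 : ℝ) ^ i * (-1) ^ i = 1 := by rw [← mul_pow]; norm_num
  rw [show (-b * s) ^ i = (-1) ^ i * (b ^ i * s ^ i) by ring]
  linear_combination ((k + a).choose (k - i) * b ^ i / i ! * s ^ i) * hsign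

theorem sum_choose_mul_factorial_div_pow (m k : ℕ) (b : ℝ) {c : ℝ} (hc : c ≠ 0) :
    (k ! * m ! / (k + m)! : ℝ) *
        ∑ i ∈ range (k + 1),
          (k + m).choose (k - i) * b ^ i / i ! * ((m + i)! / (m ! * c ^ (m + 1 + i))) =
      (c + b) ^ k / c ^ (m + 1 + k) := by
  rw [mul_sum, add_comm c, add_pow, sum_div]
  refine sum_congr rfl fun i hi => ?_
  have hik : i ≤ k := Nat.lt_succ_iff.mp (mem_range.mp hi)
  have hchoose := Nat.cast_choose ℝ (show k - i ≤ k + m by omega)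
  rw [show k + m - (k - i) = m + i by omega] at hchoose
  rw [hchoose, Nat.cast_choose ℝ hik, show m + 1 + k = m + 1 + i + (k - i) by omega]
  field_simp
  ring

section GaussianMoments

variable {V : Type*} [NormedAddCommGroup V] [InnerProductSpace ℝ V] [FiniteDimensional ℝ V]
  [MeasurableSpace V] [BorelSpace V]

theorem integral_norm_pow_mul_exp_neg_mul_sq {m : ℕ} (hV : finrank ℝ V = 2 * (m + 1))
    {c : ℝ} (hc : 0 < c) (i : ℕ) :
    ∫ x : V, ‖x‖ ^ (2 * i) * Real.exp (-(c * ‖x‖ ^ 2)) =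
      π ^ (m + 1) * ((m + i)! / (m ! * c ^ (m + 1 + i))) := by
  have : Nontrivial V := Module.nontrivial_of_finrank_eq_succ (n := 2 * m + 1) (by omega)
  have hball : volume.real (Metric.ball (0 : V) 1) = π ^ (m + 1) / (m + 1)! := by
    rw [measureReal_def, InnerProductSpace.volume_ball_of_dim_even hV, ENNReal.ofReal_one,
      one_pow, one_mul, ENNReal.toReal_ofReal (by positivity)]
  have hradial :
      ∫ y in Ioi (0 : ℝ), y ^ (2 * (m + 1) - 1) • (y ^ (2 * i) * Real.exp (-(c * y ^ 2))) =
        ∫ y in Ioi (0 : ℝ), y ^ (2 * (m + i) + 1) * Real.exp (-(c * y ^ 2)) := by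
    refine setIntegral_congr_fun measurableSet_Ioi fun y _ => ?_
    rw [smul_eq_mul, ← mul_assoc, ← pow_add]
    congr 2
    omega
  rw [integral_fun_norm_addHaar volume fun y => y ^ (2 * i) * Real.exp (-(c * y ^ 2)), hV, hball,
    hradial, integral_Ioi_pow_mul_exp_neg_mul_sq hc, Nat.factorial_succ,
    show m + i + 1 = m + 1 + i by ring, nsmul_eq_mul, smul_eq_mul]
  push_cast
  field_simp

theorem integral_laguerre_mul_exp_neg_mul_norm_sq {m : ℕ} (hV : finrank ℝ V = 2 * (m + 1))
    (k : ℕ) (b : ℝ) {c : ℝ} (hc : 0 < c) :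
    (k ! * m ! / (k + m)! : ℝ) *
        ∫ x : V, laguerre m k (-b * ‖x‖ ^ 2) * Real.exp (-(c * ‖x‖ ^ 2)) =
      π ^ (m + 1) * ((c + b) ^ k / c ^ (m + 1 + k)) := by
  have hmoment_integrable (i : ℕ) :
      Integrable fun x : V => ‖x‖ ^ (2 * i) * Real.exp (-(c * ‖x‖ ^ 2)) :=
    .of_integral_ne_zero (by rw [integral_norm_pow_mul_exp_neg_mul_sq hV hc]; positivity)
  have hexpand : (fun x : V => laguerre m k (-b * ‖x‖ ^ 2) * Real.exp (-(c * ‖x‖ ^ 2))) =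
      fun x => ∑ i ∈ range (k + 1), ((k + m).choose (k - i) * b ^ i / i !) *
        (‖x‖ ^ (2 * i) * Real.exp (-(c * ‖x‖ ^ 2))) := by
    funext x
    rw [laguerre_neg_mul, sum_mul]
    exact sum_congr rfl fun i _ => by rw [pow_mul]; ring
  rw [hexpand, integral_finsetSum _ fun i _ => (hmoment_integrable i).const_mul _,
    ← sum_choose_mul_factorial_div_pow m k b hc.ne', mul_left_comm,
    Finset.mul_sum (a := π ^ (m + 1))]
  congr 1
  refine sum_congr rfl fun i _ => ?_
  rw [integral_const_mul, integral_norm_pow_mul_exp_neg_mul_sq hV hc]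
  ring

end GaussianMoments

theorem integral_prod_sum_sq_eq_integral_norm_sq {ι κ E : Type*} [Fintype ι] [Fintype κ]
    [NormedAddCommGroup E] [NormedSpace ℝ E] (G : ℝ → E) :
    ∫ q : (ι → ℝ) × (κ → ℝ), G ((∑ j, q.1 j ^ 2) + ∑ j, q.2 j ^ 2) =
      ∫ x : EuclideanSpace ℝ (ι ⊕ κ), G (‖x‖ ^ 2) := by
  let e := (MeasurableEquiv.toLp 2 (ι ⊕ κ → ℝ)).symm.trans
    (MeasurableEquiv.sumPiEquivProdPi fun _ : ι ⊕ κ => ℝ)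
  have he : MeasurePreserving e volume volume :=
    (measurePreserving_sumPiEquivProdPi fun _ : ι ⊕ κ => (volume : Measure ℝ)).comp
      (EuclideanSpace.volume_preserving_symm_measurableEquiv_toLp _)
  rw [← he.integral_comp e.measurableEmbedding]
  congr 1 with x
  rw [EuclideanSpace.norm_sq_eq, Fintype.sum_sum_type]
  simp only [Real.norm_eq_abs, sq_abs]
  rfl

theorem twistedHeatKernelR_neg {n : ℕ} (lam t : ℝ) (p : (Fin n → ℝ) × (Fin n → ℝ)) :
    twistedHeatKernelR (-lam) t p = twistedHeatKernelR lam t p := by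
  have hpow : (-lam) ^ n * Real.sinh (-(t * lam)) ^ (-(n : ℤ)) =
      lam ^ n * Real.sinh (t * lam) ^ (-(n : ℤ)) := by
    rw [Real.sinh_neg, zpow_neg, zpow_neg, zpow_natCast, zpow_natCast, ← div_eq_mul_inv,
      ← div_eq_mul_inv, ← div_pow, ← div_pow, neg_div_neg_eq]
  simp only [twistedHeatKernelR, mul_neg]
  rw [mul_assoc _ ((-lam) ^ n), hpow, ← mul_assoc, Real.sinh_neg, Real.cosh_neg, div_neg]
  ring_nf

theorem twistedHeatKernelR_abs {n : ℕ} (lam t : ℝ) (p : (Fin n → ℝ) × (Fin n → ℝ)) :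
    twistedHeatKernelR |lam| t p = twistedHeatKernelR lam t p := by
  rcases abs_choice lam with h | h <;> rw [h]
  exact twistedHeatKernelR_neg lam t p

theorem twistedHeatKernelR_two_mul_mul_exp {n : ℕ} {lam t : ℝ} (h : Real.sinh (t * lam) ≠ 0)
    (q : (Fin n → ℝ) × (Fin n → ℝ)) :
    twistedHeatKernelR lam t (fun j => 2 * q.1 j, fun j => 2 * q.2 j) *
        Real.exp (lam * ((∑ j, q.1 j ^ 2) + ∑ j, q.2 j ^ 2)) =
      (4 * π) ^ (-(n : ℤ)) * lam ^ n * Real.sinh (t * lam) ^ (-(n : ℤ)) *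
        Real.exp (-(lam * Real.exp (-(t * lam)) / Real.sinh (t * lam) *
          ((∑ j, q.1 j ^ 2) + ∑ j, q.2 j ^ 2))) := by
  have hscale : ((∑ j, (2 * q.1 j) ^ 2) + ∑ j, (2 * q.2 j) ^ 2) =
      4 * ((∑ j, q.1 j ^ 2) + ∑ j, q.2 j ^ 2) := by
    simp only [mul_pow, ← Finset.mul_sum]
    ring
  have hexponent (s : ℝ) : -(lam / 4) * (Real.cosh (t * lam) / Real.sinh (t * lam)) * (4 * s) +
      lam * s = -(lam * Real.exp (-(t * lam)) / Real.sinh (t * lam) * s) := by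
    rw [← Real.cosh_sub_sinh]
    generalize Real.sinh (t * lam) = σ at h ⊢
    field_simp
    ring
  rw [twistedHeatKernelR, hscale, mul_assoc, ← Real.exp_add, hexponent]

theorem sinh_prefactor_mul_add_pow_div_pow (n k : ℕ) {μ X : ℝ} (hμ : μ ≠ 0)
    (hX : X ≠ 0) :
    (4 * π) ^ (-(n : ℤ)) * μ ^ n * Real.sinh X ^ (-(n : ℤ)) *
        (π ^ n * ((μ * Real.exp (-X) / Real.sinh X + 2 * μ) ^ k /
          (μ * Real.exp (-X) / Real.sinh X) ^ (n + k))) =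
      ((4 : ℝ) ^ n)⁻¹ * Real.exp X ^ (2 * k + n) := by
  have hσ : Real.sinh X ≠ 0 := Real.sinh_ne_zero.mpr hX
  have hsum : μ * Real.exp (-X) / Real.sinh X + 2 * μ = μ * Real.exp X / Real.sinh X := by
    rw [← Real.cosh_sub_sinh, ← Real.cosh_add_sinh]
    field_simp
    ring
  rw [hsum, Real.exp_neg, zpow_neg, zpow_neg, zpow_natCast, zpow_natCast]
  simp only [div_pow, mul_pow, inv_pow]
  field_simp
  ring

/-- The holomorphic extension `φ^{n-1}_{k,λ}(2iy,2iv)` is written out as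
`L_k^{n-1}(-2|λ|(|y|²+|v|²)) e^{|λ|(|y|²+|v|²)}`; the constant is `c_λ = 4^{-n}`. -/
theorem laguerre_imaginary_integral_identity
    {n : ℕ} (hn : 0 < n) (lam : ℝ) (hlam : lam ≠ 0) :
    ∃ c : ℝ, ∀ (t : ℝ), 0 < t → ∀ k : ℕ,
      ((k.factorial : ℝ) * ((n - 1).factorial : ℝ) / ((k + n - 1).factorial : ℝ)) *
        ∫ q : (Fin n → ℝ) × (Fin n → ℝ),
          twistedHeatKernelR lam (2 * t) (fun j => 2 * q.1 j, fun j => 2 * q.2 j) *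
            (laguerre (n - 1) k (-2 * |lam| * ((∑ j, (q.1 j) ^ 2) + ∑ j, (q.2 j) ^ 2)) *
              Real.exp (|lam| * ((∑ j, (q.1 j) ^ 2) + ∑ j, (q.2 j) ^ 2))) =
      c * Real.exp (2 * t * (2 * k + n) * |lam|) := by
  obtain ⟨m, rfl⟩ : ∃ m, n = m + 1 := ⟨n - 1, by omega⟩
  refine ⟨((4 : ℝ) ^ (m + 1))⁻¹, fun t ht k => ?_⟩
  set μ := |lam|
  have hμ : 0 < μ := abs_pos.mpr hlam
  have hX : 0 < 2 * t * μ := by positivity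
  set c := μ * Real.exp (-(2 * t * μ)) / Real.sinh (2 * t * μ)
  set A := (4 * π) ^ (-((m + 1 : ℕ) : ℤ)) * μ ^ (m + 1) *
    Real.sinh (2 * t * μ) ^ (-((m + 1 : ℕ) : ℤ))
  have hc : 0 < c := div_pos (by positivity) (Real.sinh_pos_iff.mpr hX)
  have hV : finrank ℝ (EuclideanSpace ℝ (Fin (m + 1) ⊕ Fin (m + 1))) = 2 * (m + 1) := by
    simp only [finrank_euclideanSpace, Fintype.card_sum, Fintype.card_fin]
    ring
  have hintegrand (q : (Fin (m + 1) → ℝ) × (Fin (m + 1) → ℝ)) :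
      twistedHeatKernelR lam (2 * t) (fun j => 2 * q.1 j, fun j => 2 * q.2 j) *
          (laguerre m k (-2 * μ * ((∑ j, q.1 j ^ 2) + ∑ j, q.2 j ^ 2)) *
            Real.exp (μ * ((∑ j, q.1 j ^ 2) + ∑ j, q.2 j ^ 2))) =
        A * (laguerre m k (-(2 * μ) * ((∑ j, q.1 j ^ 2) + ∑ j, q.2 j ^ 2)) *
          Real.exp (-(c * ((∑ j, q.1 j ^ 2) + ∑ j, q.2 j ^ 2)))) := by
    rw [← twistedHeatKernelR_abs, mul_left_comm,
      twistedHeatKernelR_two_mul_mul_exp (Real.sinh_ne_zero.mpr hX.ne'), neg_mul 2 μ]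
    ring
  simp only [Nat.add_sub_cancel, show k + (m + 1) - 1 = k + m by omega, hintegrand]
  rw [integral_prod_sum_sq_eq_integral_norm_sq
      (fun s => A * (laguerre m k (-(2 * μ) * s) * Real.exp (-(c * s)))),
    integral_const_mul, mul_left_comm, integral_laguerre_mul_exp_neg_mul_norm_sq hV k _ hc,
    sinh_prefactor_mul_add_pow_div_pow _ _ hμ.ne' hX.ne', ← Real.exp_nat_mul]
  congr 2
  push_cast
  ring
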